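/- The exponential generating function of the Eulerian polynomials satisfies Σ_{n≥0} A_n(t) u^n/n! = (1−t)/(1−t·e^{(1−t)u}), as an identity of formal power series in u over the field ℚ(t) (equivalently, (1−t·e^{(1−t)u})·Σ_{n≥0} A_n(t) u^n/n! = 1−t). -/

import Mathlib

open scoped Classical
open Finset MvPolynomial

/-- The word `w` padded with a `0` at the front and at the end; `pad w i` is the
`i`-th letter of `0, w_1, …, w_M, 0` (so `pad w 0 = 0 = pad w (M+1)`). -/
def pad (w : List ℕ) : ℕ → ℕ := fun i => (0 :: (w ++ [0])).getD i 0

/-- number of descents (indices `0 ≤ i ≤ M` with `π_i > π_{i+1}`, convention `π_0 = π_{M+1} = 0`). -/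
def desN (w : List ℕ) : ℕ :=
  ((Finset.range (w.length + 1)).filter fun i => pad w (i + 1) < pad w i).card

/-- number of ascents. -/
def ascN (w : List ℕ) : ℕ :=
  ((Finset.range (w.length + 1)).filter fun i => pad w i < pad w (i + 1)).card

/-- number of plateaus. -/
def platN (w : List ℕ) : ℕ :=
  ((Finset.range (w.length + 1)).filter fun i => pad w i = pad w (i + 1)).card

/-- number of double descents: indices `1 ≤ i ≤ M` with `π_{i-1} > π_i > π_{i+1}`. -/
def ddN (w : List ℕ) : ℕ :=
  ((Finset.range w.length).filter fun i =>
    pad w (i + 1) < pad w i ∧ pad w (i + 2) < pad w (i + 1)).card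

/-- number of cyclic descents: indices `1 ≤ i ≤ M` with `π_i > π_{i+1}`, cyclic convention
`π_{M+1} = π_1`. -/
def cdesN (w : List ℕ) : ℕ :=
  ((Finset.range w.length).filter fun i =>
    w.getD ((i + 1) % w.length) 0 < w.getD i 0).card

/-- number of cyclic ascents. -/
def cascN (w : List ℕ) : ℕ :=
  ((Finset.range w.length).filter fun i =>
    w.getD i 0 < w.getD ((i + 1) % w.length) 0).card

/-- The permutations of `[n] = {1,…,n}`, as words (lists). -/
def Sn (n : ℕ) : Finset (List ℕ) := (List.range' 1 n).permutations.toFinset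

/-- quasi-Stirling: no four positions `i<j<k<l` with `w_i = w_k`, `w_j = w_l`, `w_i ≠ w_j`
(no subword order-isomorphic to 1212 or 2121). -/
def IsQS (w : List ℕ) : Prop :=
  ¬ ∃ i j k l, i < j ∧ j < k ∧ k < l ∧ l < w.length ∧
      w.getD i 0 = w.getD k 0 ∧ w.getD j 0 = w.getD l 0 ∧ w.getD i 0 ≠ w.getD j 0

/-- The multiset `{1^{m 1}, …, n^{m n}}`, written as a (weakly increasing) list. -/
def msetList (n : ℕ) (m : ℕ → ℕ) : List ℕ :=
  (List.range n).flatMap fun i => List.replicate (m (i + 1)) (i + 1)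

/-- The finite set of quasi-Stirling multipermutations of `{1^{m 1}, …, n^{m n}}`. -/
noncomputable def QS (n : ℕ) (m : ℕ → ℕ) : Finset (List ℕ) :=
  (msetList n m).permutations.toFinset.filter IsQS

/-- `p` is a position of `w` holding a non-leftmost copy of its value. -/
def nonFirstPos (w : List ℕ) (p : ℕ) : Prop :=
  p < w.length ∧ ∃ q, q < p ∧ w.getD q 0 = w.getD p 0

/-- Rooted quasi-Stirling multipermutations: pairs `(π, r)` where `π` is quasi-Stirling and
either `r = none` (rooted at `0`) or `r = some p` with `p` a position of a non-first copy. -/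
noncomputable def RootedQS (n : ℕ) (m : ℕ → ℕ) : Finset (List ℕ × Option ℕ) :=
  ((QS n m) ×ˢ insert none ((Finset.range (msetList n m).length).image some)).filter
    fun P => ∀ r, P.2 = some r → nonFirstPos P.1 r

/-- Sum of the block sizes of the blocks preceding block `i`. -/
def offsetC {k : ℕ} (c : Fin k → ℕ) (i : Fin k) : ℕ :=
  ∑ j ∈ Finset.univ.filter (fun j : Fin k => (j : ℕ) < (i : ℕ)), c j

/-- The `i`-th block of the ordered set partition encoded by the word `w` together with the
composition `c` of block sizes. -/
def blockOf (k : ℕ) (w : List ℕ) (c : Fin k → ℕ) (i : Fin k) : List ℕ :=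
  (w.drop (offsetC c i)).take (c i)

/-- `B_{n,k}`: ordered set partitions of `[n]` into `k` possibly empty blocks, each block
written as a permutation of its elements; encoded as a pair `(w, c)` of a permutation word
`w` of `[n]` and a composition `c` of `n` into `k` nonnegative parts (the block sizes). -/
def Bnk (n k : ℕ) : Finset (List ℕ × (Fin k → ℕ)) :=
  Sn n ×ˢ Finset.Nat.antidiagonalTuple k n

/-- blockwise descent number of an ordered set partition. -/
def desB {k : ℕ} (P : List ℕ × (Fin k → ℕ)) : ℕ := ∑ i, desN (blockOf k P.1 P.2 i)

/-- blockwise ascent number of an ordered set partition. -/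
def ascB {k : ℕ} (P : List ℕ × (Fin k → ℕ)) : ℕ := ∑ i, ascN (blockOf k P.1 P.2 i)

/-- number of empty blocks of an ordered set partition. -/
def empB {k : ℕ} (P : List ℕ × (Fin k → ℕ)) : ℕ :=
  (Finset.univ.filter fun i => P.2 i = 0).card

/-- `A(x,y,u) = Σ_{n ≥ 0} A_n(x,y) uⁿ/n!`, power series in `u` with coefficients in
`ℚ[x,y,z] = MvPolynomial (Fin 3) ℚ` (`x = X 0`, `y = X 1`, `z = X 2`). -/
noncomputable def AEGF3 : PowerSeries (MvPolynomial (Fin 3) ℚ) :=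
  PowerSeries.mk fun j => (j.factorial : ℚ)⁻¹ •
    ∑ w ∈ Sn j, (X 0 : MvPolynomial (Fin 3) ℚ) ^ desN w * (X 1) ^ ascN w

/-- The global index of the `j`-th gap of block `i` (each block `i` has `c i + 1` gaps). -/
def gapIdx {k : ℕ} (c : Fin k → ℕ) (i : Fin k) (j : ℕ) : ℕ :=
  (∑ j' ∈ Finset.univ.filter (fun j' : Fin k => (j' : ℕ) < (i : ℕ)), (c j' + 1)) + j

/-- A bar placement `b` (bars per gap, `n + k` gaps in total) is good for the ordered set
partition `(w, c) ∈ B_{n,k}` if every descent gap of every block receives at least one bar. -/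
def GoodBars (n k : ℕ) (w : List ℕ) (c : Fin k → ℕ) (b : Fin (n + k) → ℕ) : Prop :=
  ∀ i : Fin k, ∀ j ≤ c i,
    pad (blockOf k w c i) (j + 1) < pad (blockOf k w c i) j →
      ∀ g : Fin (n + k), (g : ℕ) = gapIdx c i j → 1 ≤ b g

/-- `π_i` (1-indexed, `pad w i`) is the last copy of its value in `w`. -/
def lastCopy (w : List ℕ) (i : ℕ) : Prop :=
  ∀ j, i < j → j ≤ w.length → pad w j ≠ pad w i

/-- `π_p` is the first copy of its value; by convention the boundary entry `π_{M+1} = 0`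
is regarded as a second (non-first) copy of `0`. -/
def firstCopy (w : List ℕ) (p : ℕ) : Prop :=
  p ≤ w.length ∧ ∀ j, 1 ≤ j → j < p → pad w j ≠ pad w p

/-- sibling descent of type I at `i`: `π_{i+1}` is a first copy and `π_i > π_{i+1}`. -/
def TypeI (w : List ℕ) (i : ℕ) : Prop :=
  firstCopy w (i + 1) ∧ pad w (i + 1) < pad w i

/-- `i` is a sibling descent: `π_i` is a last copy, and either type I holds at `i` or
`π_{i+1}` is a non-first copy (type II). -/
def SDes (w : List ℕ) (i : ℕ) : Prop :=
  lastCopy w i ∧ (TypeI w i ∨ ¬ firstCopy w (i + 1))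

/-- number of sibling descents (indices `1 ≤ i ≤ M`). -/
noncomputable def sdN (w : List ℕ) : ℕ :=
  ((Finset.Icc 1 w.length).filter (SDes w)).card

/-- number of double sibling descents: indices `2 ≤ i ≤ M` such that both `i-1` and `i`
are sibling descents and `i-1` is of type I. -/
noncomputable def dsdN (w : List ℕ) : ℕ :=
  ((Finset.Icc 2 w.length).filter fun i =>
    SDes w (i - 1) ∧ SDes w i ∧ TypeI w (i - 1)).card

/-!
Inserting the letter `n + 1` into the `n + 1` gaps of a permutation of `[n]` gives the recurrence
`A_{n+1} = L_n A_n` with `L_n p = t(1 - t)p' + (n + 1)t p`. The coefficients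
`S_n = Σ_k C(n, k) (1 - t)^k A_{n-k}` of `e^{(1-t)u} · Σ A_n uⁿ/n!` then satisfy
`S_{n+1} = L_n S_n + (1 - t) S_n`, so `A_n - t S_n` obeys the same recurrence as `A_n`.
As `A_0 - t S_0 = 1 - t` and `L_0 (1 - t) = 0`, we get `A_n = t S_n` for `n ≥ 1`, which is
the identity read coefficientwise.
-/

namespace List

def descents : List ℕ → ℕ
  | [] => 0
  | [_] => 0
  | a :: b :: l => (if b < a then 1 else 0) + descents (b :: l)

theorem card_filter_getD_lt_eq_descents (l : List ℕ) :
    ((Finset.range (l.length - 1)).filter fun i => l.getD (i + 1) 0 < l.getD i 0).card =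
      l.descents := by
  induction l with
  | nil => rfl
  | cons a l ih =>
    cases l with
    | nil => rfl
    | cons b l =>
      rw [descents, ← ih, Finset.card_filter, Finset.card_filter, length_cons,
        Nat.add_sub_cancel, length_cons, Finset.sum_range_succ', add_comm]
      simp only [getD_cons_succ, getD_cons_zero, Nat.add_sub_cancel]

theorem descents_insertIdx_succ {m : ℕ} :
    ∀ (g : ℕ) (l : List ℕ), g + 1 < l.length → (∀ x ∈ l, x < m) →
      (l.insertIdx (g + 1) m).descents =
        l.descents + if l.getD (g + 1) 0 < l.getD g 0 then 0 else 1
  | 0, a :: b :: l, _, hm => by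
    have ha := hm a (by simp)
    have hb := hm b (by simp)
    simp only [insertIdx_succ_cons, insertIdx_zero, descents, getD_cons_succ, getD_cons_zero]
    split_ifs <;> omega
  | g + 1, a :: b :: l, hg, hm => by
    have ih := descents_insertIdx_succ g (b :: l) (by simpa using hg)
      fun x hx => hm x (mem_cons_of_mem a hx)
    rw [insertIdx_succ_cons, insertIdx_succ_cons, descents, ← insertIdx_succ_cons, ih]
    simp only [descents, getD_cons_succ]
    omega

section

variable {α : Type*}

theorem insertIdx_append_of_le_length {a : α} (t : List α) :
    ∀ {g : ℕ} {l : List α}, g ≤ l.length → (l ++ t).insertIdx g a = l.insertIdx g a ++ t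
  | 0, _, _ => rfl
  | g + 1, b :: l, hg => by
    simp only [cons_append, insertIdx_succ_cons,
      insertIdx_append_of_le_length t (l := l) (by simpa using hg)]

variable [BEq α] [LawfulBEq α]

theorem idxOf_insertIdx_of_notMem {a : α} :
    ∀ {g : ℕ} {l : List α}, a ∉ l → g ≤ l.length → (l.insertIdx g a).idxOf a = g
  | 0, _, _, _ => by simp
  | g + 1, b :: l, ha, hg => by
    rw [mem_cons, not_or] at ha
    rw [insertIdx_succ_cons, idxOf_cons_ne _ (Ne.symm ha.1),
      idxOf_insertIdx_of_notMem ha.2 (by simpa using hg)]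

theorem erase_insertIdx_of_notMem {a : α} {g : ℕ} {l : List α} (ha : a ∉ l)
    (hg : g ≤ l.length) : (l.insertIdx g a).erase a = l := by
  rw [erase_eq_eraseIdx_of_idxOf (idxOf_insertIdx_of_notMem ha hg), eraseIdx_insertIdx_self]

theorem insertIdx_idxOf_erase {a : α} {l : List α} (ha : a ∈ l) :
    (l.erase a).insertIdx (l.idxOf a) a = l := by
  have hlt : l.idxOf a < l.length := idxOf_lt_length_of_mem ha
  have h := insertIdx_eraseIdx_getElem hlt
  rwa [getElem_idxOf, ← erase_eq_eraseIdx_of_idxOf rfl] at h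

end

theorem range'_one_succ_perm (n : ℕ) :
    (range' 1 (n + 1)).Perm ((n + 1) :: range' 1 n) := by
  rw [range'_1_concat, add_comm]
  exact perm_append_singleton _ _

end List

theorem desN_eq_descents (w : List ℕ) : desN w = (0 :: (w ++ [0])).descents := by
  rw [← List.card_filter_getD_lt_eq_descents]
  simp [desN, pad]

theorem desN_insertIdx {w : List ℕ} {g m : ℕ} (hg : g ≤ w.length) (hm : ∀ x ∈ w, x < m)
    (hm0 : 0 < m) :
    desN (w.insertIdx g m) = desN w + if pad w (g + 1) < pad w g then 0 else 1 := by
  have hpad : 0 :: (w.insertIdx g m ++ [0]) = (0 :: (w ++ [0])).insertIdx (g + 1) m := by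
    rw [List.insertIdx_succ_cons, List.insertIdx_append_of_le_length _ hg]
  rw [desN_eq_descents, desN_eq_descents, hpad, List.descents_insertIdx_succ]
  · rfl
  · simpa using hg
  · simpa [or_imp, forall_and, hm0] using hm

theorem mem_Sn {n : ℕ} {w : List ℕ} : w ∈ Sn n ↔ w.Perm (List.range' 1 n) := by
  simp [Sn, List.mem_permutations]

theorem length_of_mem_Sn {n : ℕ} {w : List ℕ} (h : w ∈ Sn n) : w.length = n := by
  simpa using (mem_Sn.1 h).length_eq

theorem lt_of_mem_Sn {n : ℕ} {w : List ℕ} (h : w ∈ Sn n) {x : ℕ} (hx : x ∈ w) :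
    x < n + 1 := by
  have := (mem_Sn.1 h).subset hx
  rw [List.mem_range'_1] at this
  omega

theorem mem_Sn_succ_iff {n : ℕ} {w : List ℕ} :
    w ∈ Sn (n + 1) ↔ n + 1 ∈ w ∧ w.erase (n + 1) ∈ Sn n := by
  rw [mem_Sn, mem_Sn]
  constructor
  · intro h
    have hmem : n + 1 ∈ w := h.mem_iff.2 (by simp)
    refine ⟨hmem, List.Perm.cons_inv (a := n + 1) ?_⟩
    exact (List.perm_cons_erase hmem).symm.trans (h.trans (List.range'_one_succ_perm n))
  · rintro ⟨hmem, h⟩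
    exact ((List.perm_cons_erase hmem).trans (h.cons _)).trans (List.range'_one_succ_perm n).symm

/-- Inserting `n + 1` into the `n + 1` gaps of the permutations of `[n]` enumerates the
permutations of `[n + 1]`; the new letter adds a descent unless it lands in a descent gap. -/
theorem sum_Sn_succ {M : Type*} [AddCommMonoid M] (f : ℕ → M) (n : ℕ) :
    ∑ w ∈ Sn (n + 1), f (desN w) =
      ∑ w ∈ Sn n, ∑ g ∈ Finset.range (n + 1),
        f (desN w + if pad w (g + 1) < pad w g then 0 else 1) := by
  rw [← Finset.sum_product']
  symm
  refine Finset.sum_nbij' (fun p => p.1.insertIdx p.2 (n + 1))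
    (fun w => (w.erase (n + 1), w.idxOf (n + 1))) ?_ ?_ ?_ ?_ ?_
  · rintro ⟨w, g⟩ hp
    rw [Finset.mem_product, Finset.mem_range] at hp
    have hg : g ≤ w.length := by rw [length_of_mem_Sn hp.1]; omega
    have hnotin : n + 1 ∉ w := fun h => (lt_of_mem_Sn hp.1 h).false
    rw [mem_Sn_succ_iff, List.mem_insertIdx hg,
      List.erase_insertIdx_of_notMem hnotin hg]
    exact ⟨Or.inl rfl, hp.1⟩
  · intro w hw
    rw [mem_Sn_succ_iff] at hw
    rw [Finset.mem_product, Finset.mem_range]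
    refine ⟨hw.2, ?_⟩
    have hlt := List.idxOf_lt_length_of_mem hw.1
    have hlen := List.length_erase_of_mem hw.1
    rw [length_of_mem_Sn hw.2] at hlen
    exact hlt.trans_le (by omega)
  · rintro ⟨w, g⟩ hp
    rw [Finset.mem_product, Finset.mem_range] at hp
    have hg : g ≤ w.length := by rw [length_of_mem_Sn hp.1]; omega
    have hnotin : n + 1 ∉ w := fun h => (lt_of_mem_Sn hp.1 h).false
    exact Prod.ext (List.erase_insertIdx_of_notMem hnotin hg)
      (List.idxOf_insertIdx_of_notMem hnotin hg)
  · intro w hw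
    exact List.insertIdx_idxOf_erase (mem_Sn_succ_iff.1 hw).1
  · rintro ⟨w, g⟩ hp
    rw [Finset.mem_product, Finset.mem_range] at hp
    have hg : g ≤ w.length := by rw [length_of_mem_Sn hp.1]; omega
    rw [desN_insertIdx hg (fun x hx => lt_of_mem_Sn hp.1 hx) n.succ_pos]

namespace Polynomial

variable {R : Type*} [CommRing R]

noncomputable def eulerStep (n : ℕ) : R[X] →ₗ[R] R[X] :=
  LinearMap.mulLeft R (X * (1 - X)) ∘ₗ derivative + LinearMap.mulLeft R ((n + 1 : R[X]) * X)

theorem eulerStep_apply (n : ℕ) (p : R[X]) :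
    eulerStep n p = X * (1 - X) * derivative p + (n + 1 : R[X]) * X * p := rfl

theorem eulerStep_X_pow (n d : ℕ) :
    eulerStep n (X ^ d : R[X]) = (d : R[X]) * X ^ d + (n + 1 - d : R[X]) * X ^ (d + 1) := by
  rw [eulerStep_apply, derivative_X_pow, map_natCast]
  cases d with
  | zero => simp
  | succ d => simp only [Nat.add_sub_cancel, Nat.cast_succ]; ring

theorem eulerStep_X_mul (n : ℕ) (p : R[X]) :
    eulerStep n (X * p) = X * eulerStep n p + X * (1 - X) * p := by
  simp only [eulerStep_apply, derivative_mul, derivative_X]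
  ring

theorem eulerStep_one_sub_X_pow_mul (i j : ℕ) (p : R[X]) :
    eulerStep (i + j) ((1 - X) ^ i * p) = (1 - X) ^ i * eulerStep j p := by
  simp only [eulerStep_apply, derivative_mul, derivative_pow, derivative_sub, derivative_one,
    derivative_X, map_natCast, Nat.cast_add]
  cases i with
  | zero => simp
  | succ i => simp only [Nat.add_sub_cancel, Nat.cast_succ]; ring

theorem eulerStep_zero_one_sub_X : eulerStep 0 (1 - X : R[X]) = 0 := by
  simp only [eulerStep_apply, derivative_sub, derivative_one, derivative_X]
  ring

section

variable (R)

noncomputable def eulerian (n : ℕ) : R[X] := ∑ w ∈ Sn n, X ^ desN w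

theorem eulerian_zero : eulerian R 0 = 1 := by
  rw [eulerian, Sn, List.range'_zero, List.permutations_nil, List.toFinset_cons,
    List.toFinset_nil, insert_empty_eq, sum_singleton, show desN [] = 0 from rfl, pow_zero]

theorem eulerian_succ (n : ℕ) : eulerian R (n + 1) = eulerStep n (eulerian R n) := by
  rw [eulerian, sum_Sn_succ (fun d => (X ^ d : R[X])), eulerian, map_sum]
  refine sum_congr rfl fun w hw => ?_
  have hsplit : ∀ g, (X ^ (desN w + if pad w (g + 1) < pad w g then 0 else 1) : R[X]) =
      X ^ (desN w + 1) + if pad w (g + 1) < pad w g then X ^ desN w - X ^ (desN w + 1) else 0 := by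
    intro g
    split_ifs <;> simp
  have hdes : ((range (n + 1)).filter fun g => pad w (g + 1) < pad w g).card = desN w := by
    rw [desN, length_of_mem_Sn hw]
  rw [sum_congr rfl fun g _ => hsplit g, sum_add_distrib, sum_const, card_range, ← sum_filter,
    sum_const, hdes, eulerStep_X_pow, nsmul_eq_mul, nsmul_eq_mul]
  push_cast
  ring

end

/-- `binomConv a n = n! [uⁿ] (e^{(1 - X)u} · Σₖ a k uᵏ/k!)`. -/
noncomputable def binomConv (a : ℕ → R[X]) (n : ℕ) : R[X] :=
  ∑ ij ∈ antidiagonal n, n.choose ij.1 • ((1 - X) ^ ij.1 * a ij.2)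

@[simp]
theorem binomConv_zero (a : ℕ → R[X]) : binomConv a 0 = a 0 := by
  simp [binomConv]

theorem binomConv_succ {a : ℕ → R[X]} (ha : ∀ n, a (n + 1) = eulerStep n (a n)) (n : ℕ) :
    binomConv a (n + 1) = eulerStep n (binomConv a n) + (1 - X) * binomConv a n := by
  rw [binomConv, Finset.sum_antidiagonal_choose_succ_nsmul
    (fun i j => ((1 - X) ^ i * a j : R[X])), binomConv, map_sum, mul_sum]
  congr 1 <;> refine sum_congr rfl fun ij hij => ?_
  · rw [HasAntidiagonal.mem_antidiagonal] at hij
    rw [ha, ← eulerStep_one_sub_X_pow_mul, hij, map_nsmul]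
  · rw [Nat.choose_symm_of_eq_add (HasAntidiagonal.mem_antidiagonal.1 hij).symm, mul_smul_comm,
      pow_succ]
    ring_nf

theorem eq_X_mul_binomConv {a : ℕ → R[X]} (h0 : a 0 = 1)
    (ha : ∀ n, a (n + 1) = eulerStep n (a n)) (n : ℕ) :
    a (n + 1) = X * binomConv a (n + 1) := by
  have hstep : ∀ n, a (n + 1) - X * binomConv a (n + 1) =
      eulerStep n (a n - X * binomConv a n) := fun n => by
    rw [binomConv_succ ha, map_sub, eulerStep_X_mul, ha]
    ring
  rw [← sub_eq_zero]
  induction n with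
  | zero => rw [hstep, binomConv_zero, h0, mul_one, eulerStep_zero_one_sub_X]
  | succ n ih => rw [hstep, ih, map_zero]

theorem map_binomConv {S : Type*} [CommRing S] (f : R[X] →+* S)
    (a : ℕ → R[X]) (n : ℕ) :
    f (binomConv a n) =
      ∑ ij ∈ antidiagonal n, (n.choose ij.1 : S) * ((1 - f X) ^ ij.1 * f (a ij.2)) := by
  simp [binomConv, nsmul_eq_mul]

end Polynomial

theorem PowerSeries.coeff_mk_inv_factorial_mul {K : Type*} [Field K] [CharZero K]
    (a b : ℕ → K) (n : ℕ) :
    coeff n (mk (fun i => (i.factorial : K)⁻¹ * a i) *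
        mk (fun j => (j.factorial : K)⁻¹ * b j)) =
      (n.factorial : K)⁻¹ *
        ∑ ij ∈ antidiagonal n, (n.choose ij.1 : K) * (a ij.1 * b ij.2) := by
  rw [coeff_mul, mul_sum]
  refine sum_congr rfl fun ⟨i, j⟩ hij => ?_
  rw [HasAntidiagonal.mem_antidiagonal] at hij
  subst hij
  have : ((i + j).factorial : K) ≠ 0 := Nat.cast_ne_zero.2 (Nat.factorial_ne_zero _)
  simp only [coeff_mk, Nat.cast_add_choose]
  field_simp

/-- `(1 − t·e^{(1−t)u}) · Σ_{n≥0} A_n(t) uⁿ/n! = 1 − t` over `ℚ(t)`. -/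
theorem stmt5 :
    (1 - PowerSeries.C (R := RatFunc ℚ) RatFunc.X *
        PowerSeries.mk (fun j => (j.factorial : RatFunc ℚ)⁻¹ * (1 - RatFunc.X) ^ j)) *
      PowerSeries.mk (fun j => (j.factorial : RatFunc ℚ)⁻¹ *
        ∑ w ∈ Sn j, (RatFunc.X : RatFunc ℚ) ^ desN w) =
    PowerSeries.C (R := RatFunc ℚ) (1 - RatFunc.X) := by
  set φ := algebraMap (Polynomial ℚ) (RatFunc ℚ)
  have hX : φ Polynomial.X = RatFunc.X := RatFunc.algebraMap_X
  have hA : ∀ n, ∑ w ∈ Sn n, (RatFunc.X : RatFunc ℚ) ^ desN w =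
      φ (Polynomial.eulerian ℚ n) := by
    simp [Polynomial.eulerian, hX]
  ext n
  rw [sub_mul, one_mul, mul_assoc, map_sub, PowerSeries.coeff_C_mul,
    PowerSeries.coeff_mk_inv_factorial_mul, PowerSeries.coeff_mk, PowerSeries.coeff_C]
  simp only [hA]
  rw [← hX, ← Polynomial.map_binomConv φ (Polynomial.eulerian ℚ)]
  cases n with
  | zero => simp [Polynomial.eulerian_zero]
  | succ n =>
    rw [Polynomial.eq_X_mul_binomConv (Polynomial.eulerian_zero ℚ) (Polynomial.eulerian_succ ℚ),
      map_mul, if_neg n.succ_ne_zero]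
    ring
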